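/- arXiv:1509.08519 — 2 statements merged into one kernel-verified Lean document; each statement's English description precedes it below -/
import Mathlib

section
/- (Theorem B, mixed Jensen–Lyapunov moment inequality) For every positive random variable X on a probability space such that all moments exist, and for all real numbers r < s < t, one has (λ_s)^{t−r} ≤ (λ_r)^{t−s} · (λ_t)^{s−r}, where the powers are real powers of the nonnegative quantities λ_r, λ_s, λ_t. -/
/-!
With `φ_s'' x = x ^ (s - 2)` (suitably normalised, with `-log` and `x log x` at `s = 0, 1`),
`λ_s = E[φ_s X - φ_s m - φ_s' m (X - m)]` for `m = E X`. Taylor's formula with integral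
remainder, written with its Peano kernel `K(m, x, u) ≥ 0`, and Tonelli give
`λ_s = ∫_0^∞ u ^ (s - 2) W(u) du` with `W(u) = E K(m, X, u)` independent of `s`.
Hölder's inequality makes the logarithm of such a Mellin transform convex in `s`, which is the
claimed inequality with weights `(t - s)/(t - r)` and `(s - r)/(t - r)`.
-/

open MeasureTheory

/-- The moment difference `λ_s(X)` of a positive random variable `X`. -/
noncomputable def momentLambda {Ω : Type*} [MeasurableSpace Ω] (μ : Measure Ω) (X : Ω → ℝ)
    (s : ℝ) : ℝ :=
  if s = 0 then Real.log (∫ ω, X ω ∂μ) - ∫ ω, Real.log (X ω) ∂μ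
  else if s = 1 then (∫ ω, X ω * Real.log (X ω) ∂μ) - (∫ ω, X ω ∂μ) * Real.log (∫ ω, X ω ∂μ)
  else ((∫ ω, X ω ^ s ∂μ) - (∫ ω, X ω ∂μ) ^ s) / (s * (s - 1))

open Real Set
open scoped ENNReal

theorem taylor_remainder_eq_integral {f f' f'' : ℝ → ℝ} {a b : ℝ}
    (hf : ∀ u ∈ uIcc a b, HasDerivAt f (f' u) u)
    (hf' : ∀ u ∈ uIcc a b, HasDerivAt f' (f'' u) u)
    (hf'' : IntervalIntegrable f'' volume a b) :
    f b - f a - f' a * (b - a) = ∫ u in a..b, (b - u) * f'' u := by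
  have hG : ∀ u ∈ uIcc a b, HasDerivAt (fun u => (b - u) * f' u + f u) ((b - u) * f'' u) u := by
    intro u hu
    refine ((((hasDerivAt_id u).const_sub b).mul (hf' u hu)).add (hf u hu)).congr_deriv ?_
    simp only [id]
    ring
  rw [intervalIntegral.integral_eq_sub_of_hasDerivAt hG (hf''.continuousOn_mul (by fun_prop))]
  ring

theorem lintegral_rpow_mul_le {α : Type*} [MeasurableSpace α] {ν : Measure α}
    {g w : α → ℝ≥0∞} (hg : AEMeasurable g ν) (hw : AEMeasurable w ν)
    (hg0 : ∀ᵐ a ∂ν, g a ≠ 0) (hgtop : ∀ᵐ a ∂ν, g a ≠ ∞)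
    {p q : ℝ} (hp : 0 ≤ p) (hq : 0 ≤ q) (hpq : p + q = 1) (r t : ℝ) :
    ∫⁻ a, g a ^ (p * r + q * t) * w a ∂ν ≤
      (∫⁻ a, g a ^ r * w a ∂ν) ^ p * (∫⁻ a, g a ^ t * w a ∂ν) ^ q := by
  calc ∫⁻ a, g a ^ (p * r + q * t) * w a ∂ν
      = ∫⁻ a, (g a ^ r * w a) ^ p * (g a ^ t * w a) ^ q ∂ν := by
        refine lintegral_congr_ae ?_
        filter_upwards [hg0, hgtop] with a h0 htop
        rw [ENNReal.mul_rpow_of_nonneg _ _ hp, ENNReal.mul_rpow_of_nonneg _ _ hq,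
          ← ENNReal.rpow_mul, ← ENNReal.rpow_mul, mul_mul_mul_comm,
          ← ENNReal.rpow_add _ _ h0 htop,
          ← ENNReal.rpow_add_of_nonneg _ _ hp hq, hpq, ENNReal.rpow_one, mul_comm r, mul_comm t]
    _ ≤ _ := ENNReal.lintegral_mul_norm_pow_le ((hg.pow_const r).mul hw)
        ((hg.pow_const t).mul hw) hp hq hpq

lemma integral_pos_of_ae_pos {Ω : Type*} [MeasurableSpace Ω] {μ : Measure Ω} [NeZero μ]
    {X : Ω → ℝ} (hpos : ∀ᵐ ω ∂μ, 0 < X ω) (hX : Integrable X μ) : 0 < ∫ ω, X ω ∂μ := by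
  rw [integral_pos_iff_support_of_nonneg_ae (hpos.mono fun _ h => h.le) hX]
  refine pos_iff_ne_zero.2 fun h => ?_
  obtain ⟨ω, hω, h0⟩ := (hpos.and (measure_eq_zero_iff_ae_notMem.1 h)).exists
  exact h0 hω.ne'

/-- The convex function `φ_s` with `φ_s'' x = x ^ (s - 2)`, so that
`λ_s = E φ_s(X) - φ_s(E X)`. -/
noncomputable def powPotential (s x : ℝ) : ℝ :=
  if s = 0 then -log x else if s = 1 then x * log x else x ^ s / (s * (s - 1))

noncomputable def powPotentialDeriv (s x : ℝ) : ℝ :=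
  if s = 0 then -x⁻¹ else if s = 1 then log x + 1 else x ^ (s - 1) / (s - 1)

lemma hasDerivAt_powPotential (s : ℝ) {x : ℝ} (hx : 0 < x) :
    HasDerivAt (powPotential s) (powPotentialDeriv s x) x := by
  unfold powPotential powPotentialDeriv
  split_ifs with h0 h1
  · exact (hasDerivAt_log hx.ne').neg
  · exact hasDerivAt_mul_log hx.ne'
  · have hs : s * (s - 1) ≠ 0 := mul_ne_zero h0 (sub_ne_zero.mpr h1)
    refine ((hasDerivAt_rpow_const (p := s) (Or.inl hx.ne')).div_const _).congr_deriv ?_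
    field_simp

lemma hasDerivAt_powPotentialDeriv (s : ℝ) {x : ℝ} (hx : 0 < x) :
    HasDerivAt (powPotentialDeriv s) (x ^ (s - 2)) x := by
  unfold powPotentialDeriv
  split_ifs with h0 h1
  · refine (hasDerivAt_inv hx.ne').neg.congr_deriv ?_
    rw [h0, zero_sub, rpow_neg hx.le, neg_neg, show (2 : ℝ) = (2 : ℕ) by norm_num, rpow_natCast]
  · refine ((hasDerivAt_log hx.ne').add_const 1).congr_deriv ?_
    rw [h1, show (1 : ℝ) - 2 = -1 by norm_num, rpow_neg_one]
  · refine ((hasDerivAt_rpow_const (p := s - 1) (Or.inl hx.ne')).div_const _).congr_deriv ?_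
    rw [sub_sub, one_add_one_eq_two]
    field_simp [sub_ne_zero.mpr h1]

noncomputable def powBregman (s m x : ℝ) : ℝ :=
  powPotential s x - powPotential s m - powPotentialDeriv s m * (x - m)

/-- The Peano kernel of the first-order Taylor remainder at `m`:
`f x - f m - f' m * (x - m) = ∫ u, peanoKernel m x u * f'' u`. -/
noncomputable def peanoKernel (m x u : ℝ) : ℝ :=
  if m < u then max (x - u) 0 else max (u - x) 0

lemma peanoKernel_nonneg (m x u : ℝ) : 0 ≤ peanoKernel m x u := by
  unfold peanoKernel
  split_ifs <;> exact le_max_right _ _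

lemma peanoKernel_eq_indicator_sub_indicator (m x u : ℝ) :
    peanoKernel m x u =
      (Ioc m x).indicator (fun u => x - u) u - (Ioc x m).indicator (fun u => x - u) u := by
  simp only [peanoKernel, indicator_apply, mem_Ioc]
  split_ifs <;> grind

lemma setIntegral_Ioi_peanoKernel_mul {m x : ℝ} (hm : 0 < m) (hx : 0 < x) {g : ℝ → ℝ}
    (hg : IntervalIntegrable (fun u => (x - u) * g u) volume m x) :
    IntegrableOn (fun u => peanoKernel m x u * g u) (Ioi 0) ∧
      ∫ u in Ioi 0, peanoKernel m x u * g u = ∫ u in m..x, (x - u) * g u := by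
  have hsplit : (fun u => peanoKernel m x u * g u) =
      fun u => (Ioc m x).indicator (fun u => (x - u) * g u) u -
        (Ioc x m).indicator (fun u => (x - u) * g u) u := by
    ext u
    simp only [peanoKernel_eq_indicator_sub_indicator, indicator_apply]
    split_ifs <;> ring
  have hmx : Ioc m x ⊆ Ioi 0 := fun u hu => hm.trans hu.1
  have hxm : Ioc x m ⊆ Ioi 0 := fun u hu => hx.trans hu.1
  rw [hsplit]
  refine ⟨((hg.1.integrable_indicator measurableSet_Ioc).sub
    (hg.2.integrable_indicator measurableSet_Ioc)).integrableOn, ?_⟩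
  rw [integral_sub (hg.1.integrable_indicator measurableSet_Ioc).integrableOn
      (hg.2.integrable_indicator measurableSet_Ioc).integrableOn,
    setIntegral_indicator measurableSet_Ioc, setIntegral_indicator measurableSet_Ioc,
    inter_eq_right.mpr hmx, inter_eq_right.mpr hxm]
  rfl

lemma powBregman_eq_setIntegral {m x : ℝ} (hm : 0 < m) (hx : 0 < x) (s : ℝ) :
    IntegrableOn (fun u => peanoKernel m x u * u ^ (s - 2)) (Ioi 0) ∧
      powBregman s m x = ∫ u in Ioi 0, peanoKernel m x u * u ^ (s - 2) := by
  have hpos : ∀ u ∈ uIcc m x, 0 < u := fun u hu => (lt_min hm hx).trans_le hu.1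
  have hint : IntervalIntegrable (fun u : ℝ => u ^ (s - 2)) volume m x :=
    intervalIntegral.intervalIntegrable_rpow (Or.inr fun h => (hpos 0 h).false)
  obtain ⟨hI, heq⟩ :=
    setIntegral_Ioi_peanoKernel_mul hm hx (hint.continuousOn_mul (by fun_prop))
  refine ⟨hI, ?_⟩
  rw [heq, powBregman,
    taylor_remainder_eq_integral (fun u hu => hasDerivAt_powPotential s (hpos u hu))
      (fun u hu => hasDerivAt_powPotentialDeriv s (hpos u hu)) hint]

lemma powBregman_nonneg {m x : ℝ} (hm : 0 < m) (hx : 0 < x) (s : ℝ) :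
    0 ≤ powBregman s m x := by
  rw [(powBregman_eq_setIntegral hm hx s).2]
  exact setIntegral_nonneg measurableSet_Ioi fun u hu =>
    mul_nonneg (peanoKernel_nonneg m x u) (rpow_nonneg (le_of_lt hu) _)

lemma ofReal_powBregman {m x : ℝ} (hm : 0 < m) (hx : 0 < x) (s : ℝ) :
    ENNReal.ofReal (powBregman s m x) =
      ∫⁻ u in Ioi 0, ENNReal.ofReal (peanoKernel m x u) * ENNReal.ofReal u ^ (s - 2) := by
  obtain ⟨hI, heq⟩ := powBregman_eq_setIntegral hm hx s
  rw [heq, ofReal_integral_eq_lintegral_ofReal hI (ae_restrict_of_forall_mem measurableSet_Ioi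
    fun u hu => mul_nonneg (peanoKernel_nonneg m x u) (rpow_nonneg (le_of_lt hu) _))]
  refine setLIntegral_congr_fun measurableSet_Ioi fun u hu => ?_
  rw [ENNReal.ofReal_mul (peanoKernel_nonneg m x u), ENNReal.ofReal_rpow_of_pos hu]

section Moments

variable {Ω : Type*} [MeasurableSpace Ω] {μ : Measure Ω} {X : Ω → ℝ}

lemma momentLambda_eq_integral_sub (s : ℝ) :
    momentLambda μ X s = ∫ ω, powPotential s (X ω) ∂μ - powPotential s (∫ ω, X ω ∂μ) := by
  by_cases h0 : s = 0
  · simp [momentLambda, powPotential, h0, integral_neg]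
    ring
  by_cases h1 : s = 1
  · simp [momentLambda, powPotential, h1]
  · simp [momentLambda, powPotential, h0, h1, integral_div, sub_div]

lemma integrable_powPotential {s : ℝ} (hmom : Integrable (fun ω => X ω ^ s) μ)
    (hlog : Integrable (fun ω => log (X ω)) μ)
    (hxlog : Integrable (fun ω => X ω * log (X ω)) μ) :
    Integrable (fun ω => powPotential s (X ω)) μ := by
  by_cases h0 : s = 0
  · simpa [powPotential, h0] using hlog.neg
  by_cases h1 : s = 1
  · simpa [powPotential, h1] using hxlog
  · simpa [powPotential, h0, h1] using hmom.div_const (s * (s - 1))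

variable [IsProbabilityMeasure μ]

lemma integrable_powBregman {s : ℝ} (m : ℝ) (hX : Integrable X μ)
    (hφ : Integrable (fun ω => powPotential s (X ω)) μ) :
    Integrable (fun ω => powBregman s m (X ω)) μ :=
  (hφ.sub (integrable_const _)).sub ((hX.sub (integrable_const _)).const_mul _)

lemma momentLambda_eq_integral_powBregman {s : ℝ} (hX : Integrable X μ)
    (hφ : Integrable (fun ω => powPotential s (X ω)) μ) :
    momentLambda μ X s = ∫ ω, powBregman s (∫ ω, X ω ∂μ) (X ω) ∂μ := by
  simp only [powBregman]
  rw [integral_sub, integral_sub hφ (integrable_const _), integral_const_mul,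
    integral_sub hX (integrable_const _)]
  · simp [momentLambda_eq_integral_sub]
  · exact hφ.sub (integrable_const _)
  · exact (hX.sub (integrable_const _)).const_mul _

lemma momentLambda_nonneg {s : ℝ} (hpos : ∀ᵐ ω ∂μ, 0 < X ω) (hX : Integrable X μ)
    (hφ : Integrable (fun ω => powPotential s (X ω)) μ) : 0 ≤ momentLambda μ X s := by
  rw [momentLambda_eq_integral_powBregman hX hφ]
  exact integral_nonneg_of_ae <|
    hpos.mono fun ω hω => powBregman_nonneg (integral_pos_of_ae_pos hpos hX) hω s

lemma exists_ofReal_momentLambda_eq_lintegral (hXm : Measurable X) (hpos : ∀ᵐ ω ∂μ, 0 < X ω)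
    (hX : Integrable X μ) (hφ : ∀ s, Integrable (fun ω => powPotential s (X ω)) μ) :
    ∃ W : ℝ → ℝ≥0∞, Measurable W ∧ ∀ s, ENNReal.ofReal (momentLambda μ X s) =
      ∫⁻ u in Ioi 0, ENNReal.ofReal u ^ (s - 2) * W u := by
  set M := ∫ ω, X ω ∂μ
  have hM : 0 < M := integral_pos_of_ae_pos hpos hX
  have hK : Measurable fun p : Ω × ℝ => ENNReal.ofReal (peanoKernel M (X p.1) p.2) := by
    unfold peanoKernel
    exact ENNReal.measurable_ofReal.comp <|
      Measurable.ite (measurableSet_lt measurable_const measurable_snd) (by fun_prop)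
        (by fun_prop)
  refine ⟨fun u => ∫⁻ ω, ENNReal.ofReal (peanoKernel M (X ω) u) ∂μ, hK.lintegral_prod_left,
    fun s => ?_⟩
  rw [momentLambda_eq_integral_powBregman hX (hφ s), ofReal_integral_eq_lintegral_ofReal
    (integrable_powBregman M hX (hφ s)) (hpos.mono fun ω hω => powBregman_nonneg hM hω s)]
  calc ∫⁻ ω, ENNReal.ofReal (powBregman s M (X ω)) ∂μ
      = ∫⁻ ω, (∫⁻ u in Ioi 0,
          ENNReal.ofReal (peanoKernel M (X ω) u) * ENNReal.ofReal u ^ (s - 2)) ∂μ :=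
        lintegral_congr_ae (hpos.mono fun ω hω => ofReal_powBregman hM hω s)
    _ = ∫⁻ u in Ioi 0, (∫⁻ ω,
          ENNReal.ofReal (peanoKernel M (X ω) u) * ENNReal.ofReal u ^ (s - 2) ∂μ) :=
        lintegral_lintegral_swap (hK.mul (by fun_prop)).aemeasurable
    _ = _ := lintegral_congr fun u =>
        (lintegral_mul_const _ (hK.comp measurable_prodMk_right)).trans (mul_comm _ _)

lemma momentLambda_le_rpow_mul_rpow (hXm : Measurable X) (hpos : ∀ᵐ ω ∂μ, 0 < X ω)
    (hX : Integrable X μ) (hφ : ∀ s, Integrable (fun ω => powPotential s (X ω)) μ)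
    {p q : ℝ} (hp : 0 ≤ p) (hq : 0 ≤ q) (hpq : p + q = 1) (r t : ℝ) :
    momentLambda μ X (p * r + q * t) ≤ momentLambda μ X r ^ p * momentLambda μ X t ^ q := by
  obtain ⟨W, hW, hrepr⟩ := exists_ofReal_momentLambda_eq_lintegral hXm hpos hX hφ
  have hnn := fun s => momentLambda_nonneg hpos hX (hφ s)
  have hhold := lintegral_rpow_mul_le (ν := volume.restrict (Ioi 0)) (by fun_prop) hW.aemeasurable
    (ae_restrict_of_forall_mem measurableSet_Ioi fun u hu => ENNReal.ofReal_pos.2 hu |>.ne')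
    (ae_of_all _ fun _ => ENNReal.ofReal_ne_top) hp hq hpq (r - 2) (t - 2)
  rw [show p * (r - 2) + q * (t - 2) = p * r + q * t - 2 by linear_combination -2 * hpq,
    ← hrepr, ← hrepr, ← hrepr, ENNReal.ofReal_rpow_of_nonneg (hnn r) hp,
    ENNReal.ofReal_rpow_of_nonneg (hnn t) hq, ← ENNReal.ofReal_mul (rpow_nonneg (hnn r) _)]
    at hhold
  exact (ENNReal.ofReal_le_ofReal_iff (mul_nonneg (rpow_nonneg (hnn r) _)
    (rpow_nonneg (hnn t) _))).1 hhold

end Moments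

theorem lambda_jensen_lyapunov {Ω : Type*} [MeasurableSpace Ω] (μ : Measure Ω) [IsProbabilityMeasure μ]
    (X : Ω → ℝ) (hX : Measurable X) (hpos : ∀ᵐ ω ∂μ, 0 < X ω)
    (hmom : ∀ s : ℝ, Integrable (fun ω => X ω ^ s) μ)
    (hlog : Integrable (fun ω => Real.log (X ω)) μ)
    (hxlog : Integrable (fun ω => X ω * Real.log (X ω)) μ)
    (r s t : ℝ) (hrs : r < s) (hst : s < t) :
    momentLambda μ X s ^ (t - r) ≤ momentLambda μ X r ^ (t - s) * momentLambda μ X t ^ (s - r) := by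
  have hXint : Integrable X μ := by simpa using hmom 1
  have hφ s := integrable_powPotential (hmom s) hlog hxlog
  have hnn s := momentLambda_nonneg hpos hXint (hφ s)
  have htr : 0 < t - r := by linarith
  have hs : (t - s) / (t - r) * r + (s - r) / (t - r) * t = s := by field_simp; ring
  have hinterp := momentLambda_le_rpow_mul_rpow hX hpos hXint hφ
    (div_nonneg (sub_nonneg.2 hst.le) htr.le) (div_nonneg (sub_nonneg.2 hrs.le) htr.le)
    (by field_simp; ring) r t
  rw [hs] at hinterp
  calc momentLambda μ X s ^ (t - r)
      ≤ (momentLambda μ X r ^ ((t - s) / (t - r)) * momentLambda μ X t ^ ((s - r) / (t - r)))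
          ^ (t - r) := rpow_le_rpow (hnn s) hinterp htr.le
    _ = momentLambda μ X r ^ (t - s) * momentLambda μ X t ^ (s - r) := by
      rw [mul_rpow (rpow_nonneg (hnn r) _) (rpow_nonneg (hnn t) _), ← rpow_mul (hnn r),
        ← rpow_mul (hnn t), div_mul_cancel₀ _ htr.ne', div_mul_cancel₀ _ htr.ne']
end

section
/- (Lemma 2) For all real numbers s, t, u, one has ξ(s,t)·ξ(s,u) − [ξ(s, (t+u)/2) − ξ((s+u)/2, (s+t)/2)]² ≥ 0, where ξ(s,t) := λ_s λ_t − (λ_{(s+t)/2})². -/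
open MeasureTheory

/-- `ξ(s,t) := λ_s λ_t - (λ_{(s+t)/2})²`. -/
noncomputable def momentXi {Ω : Type*} [MeasurableSpace Ω] (μ : Measure Ω) (X : Ω → ℝ)
    (s t : ℝ) : ℝ :=
  momentLambda μ X s * momentLambda μ X t - (momentLambda μ X ((s + t) / 2)) ^ 2

/-!
Put `m = E X`. For every `r`, `λ_r` is the expectation of the Taylor remainder at `m` of a function
with second derivative `c ^ (r - 2)`, that is `λ_r = E ∫_m^X (X - c) c ^ (r - 2) dc`. Since
`c ^ ((r + r') / 2 - 2) = c ^ (r / 2 - 1) c ^ (r' / 2 - 1)` and the weight `X - c` is nonnegative on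
the oriented interval, the kernel `(r, r') ↦ λ_{(r + r') / 2}` is positive semidefinite. The claimed
expression is the determinant of the Schur complement of the `(s, s)` entry in its `3 × 3` matrix at
the exponents `s, t, u`, up to the factor `λ_s ^ 2`.
-/

open Real Set

lemma sq_sub_le_mul_of_quadForm_three_nonneg {A B C P Q R : ℝ}
    (h : ∀ a b c : ℝ, 0 ≤ a ^ 2 * A + b ^ 2 * B + c ^ 2 * C +
      2 * a * b * P + 2 * a * c * Q + 2 * b * c * R) :
    (A * R - P * Q) ^ 2 ≤ (A * B - P ^ 2) * (A * C - Q ^ 2) := by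
  have hA : 0 ≤ A := by simpa using h 1 0 0
  rcases hA.eq_or_lt with hA0 | hA0
  · rw [← hA0]
    exact (by ring : _ = _).le
  -- minimizing in `a` (at `a = -(P b + Q) / A`, with `c = 1`) leaves the Schur complement form
  have hschur : ∀ b : ℝ,
      0 ≤ (A * B - P ^ 2) * (b * b) + 2 * (A * R - P * Q) * b + (A * C - Q ^ 2) := by
    intro b
    refine (mul_nonneg hA0.le (h (-(P * b + Q) / A) b 1)).trans_eq ?_
    field_simp
    ring
  have := discrim_le_zero hschur
  rw [discrim] at this
  nlinarith

lemma pos_of_mem_uIcc_of_pos {m x c : ℝ} (hm : 0 < m) (hx : 0 < x) (hc : c ∈ uIcc m x) :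
    0 < c :=
  lt_of_lt_of_le (lt_min hm hx) hc.1

lemma zero_notMem_uIcc_of_pos {m x : ℝ} (hm : 0 < m) (hx : 0 < x) : (0 : ℝ) ∉ uIcc m x :=
  fun h => lt_irrefl 0 (pos_of_mem_uIcc_of_pos hm hx h)

lemma integral_sub_mul_nonneg {f : ℝ → ℝ} {m x : ℝ} (hf : ∀ c ∈ uIcc m x, 0 ≤ f c) :
    0 ≤ ∫ c in m..x, (x - c) * f c := by
  rcases le_total m x with hmx | hxm
  · refine intervalIntegral.integral_nonneg hmx fun c hc => ?_
    refine mul_nonneg (by linarith [hc.2]) (hf c ?_)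
    rwa [uIcc_of_le hmx]
  · rw [intervalIntegral.integral_symm, ← intervalIntegral.integral_neg]
    refine intervalIntegral.integral_nonneg hxm fun c hc => ?_
    rw [← neg_mul, neg_sub]
    refine mul_nonneg (by linarith [hc.1]) (hf c ?_)
    rwa [uIcc_of_ge hxm]

/-- The Taylor remainder at `m` of `φ_r`, where `φ_r x = x ^ r / (r (r - 1))`, `φ_0 = -log` and
`φ_1 x = x log x`: all of them have `φ_r'' c = c ^ (r - 2)`. -/
noncomputable def taylorKernel (m r x : ℝ) : ℝ :=
  ∫ c in m..x, (x - c) * c ^ (r - 2)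

section taylorKernel

variable {m x : ℝ} (hm : 0 < m) (hx : 0 < x)
include hm hx

lemma taylorKernel_eq_sub (r : ℝ) :
    taylorKernel m r x = x * (∫ c in m..x, c ^ (r - 2)) - ∫ c in m..x, c ^ (r - 1) := by
  have hint : ∀ p : ℝ, IntervalIntegrable (fun c => c ^ p) volume m x := fun _ =>
    intervalIntegral.intervalIntegrable_rpow (Or.inr (zero_notMem_uIcc_of_pos hm hx))
  rw [taylorKernel, ← intervalIntegral.integral_const_mul,
    ← intervalIntegral.integral_sub ((hint _).const_mul x) (hint _)]
  refine intervalIntegral.integral_congr fun c hc => ?_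
  have hc0 := (pos_of_mem_uIcc_of_pos hm hx hc).ne'
  rw [show r - 1 = r - 2 + 1 by ring, rpow_add_one hc0]
  ring

lemma taylorKernel_of_ne {r : ℝ} (hr0 : r ≠ 0) (hr1 : r ≠ 1) :
    taylorKernel m r x = (x ^ r - m ^ r - r * m ^ (r - 1) * (x - m)) / (r * (r - 1)) := by
  have h0 := zero_notMem_uIcc_of_pos hm hx
  rw [taylorKernel_eq_sub hm hx, integral_rpow (Or.inr ⟨fun h => hr1 (by linarith), h0⟩),
    integral_rpow (Or.inr ⟨fun h => hr0 (by linarith), h0⟩), show r - 2 + 1 = r - 1 by ring,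
    show r - 1 + 1 = r by ring]
  have hpow : ∀ y : ℝ, 0 < y → y ^ r = y ^ (r - 1) * y := fun y hy => by
    rw [← rpow_add_one hy.ne', sub_add_cancel]
  have hr1' : r - 1 ≠ 0 := sub_ne_zero.mpr hr1
  rw [hpow x hx, hpow m hm]
  field_simp
  ring

lemma taylorKernel_zero : taylorKernel m 0 x = x / m - 1 - log x + log m := by
  have h0 := zero_notMem_uIcc_of_pos hm hx
  rw [taylorKernel_eq_sub hm hx, zero_sub, zero_sub]
  simp only [rpow_neg_one, integral_inv h0]
  rw [integral_rpow (Or.inr ⟨by norm_num, h0⟩), log_div hx.ne' hm.ne']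
  norm_num [rpow_neg_one]
  field_simp
  ring

lemma taylorKernel_one : taylorKernel m 1 x = x * log x - x - x * log m + m := by
  have h0 := zero_notMem_uIcc_of_pos hm hx
  rw [taylorKernel_eq_sub hm hx, show (1 : ℝ) - 2 = -1 by norm_num, sub_self]
  simp only [rpow_neg_one, rpow_zero, integral_inv h0, intervalIntegral.integral_const,
    smul_eq_mul, mul_one, log_div hx.ne' hm.ne']
  ring

end taylorKernel

lemma taylorKernel_quadForm_nonneg {m x : ℝ} (hm : 0 < m) (hx : 0 < x) {ι : Type*} [Fintype ι]
    (a r : ι → ℝ) : 0 ≤ ∑ i, ∑ j, a i * a j * taylorKernel m ((r i + r j) / 2) x := by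
  have hint : ∀ p : ℝ, IntervalIntegrable (fun c => (x - c) * c ^ (p - 2)) volume m x :=
    fun p => ContinuousOn.intervalIntegrable <| (continuousOn_const.sub continuousOn_id).mul <|
      continuousOn_id.rpow_const fun c hc => Or.inl (pos_of_mem_uIcc_of_pos hm hx hc).ne'
  have hsq : ∀ c ∈ uIcc m x, (x - c) * (∑ i, a i * c ^ (r i / 2 - 1)) ^ 2 =
      ∑ i, ∑ j, a i * a j * ((x - c) * c ^ ((r i + r j) / 2 - 2)) := by
    intro c hc
    have hc0 := pos_of_mem_uIcc_of_pos hm hx hc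
    rw [sq, Finset.sum_mul_sum, Finset.mul_sum]
    refine Finset.sum_congr rfl fun i _ => ?_
    rw [Finset.mul_sum]
    refine Finset.sum_congr rfl fun j _ => ?_
    rw [show (r i + r j) / 2 - 2 = (r i / 2 - 1) + (r j / 2 - 1) by ring, rpow_add hc0]
    ring
  have hsum : ∑ i, ∑ j, a i * a j * taylorKernel m ((r i + r j) / 2) x =
      ∫ c in m..x, (x - c) * (∑ i, a i * c ^ (r i / 2 - 1)) ^ 2 := by
    have hint_ij : ∀ i j, IntervalIntegrable
        (fun c => a i * a j * ((x - c) * c ^ ((r i + r j) / 2 - 2))) volume m x :=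
      fun i j => (hint _).const_mul _
    rw [intervalIntegral.integral_congr hsq, intervalIntegral.integral_finsetSum
      fun i _ => by
        simpa only [Finset.sum_fn] using IntervalIntegrable.sum Finset.univ fun j _ => hint_ij i j]
    refine Finset.sum_congr rfl fun i _ => ?_
    rw [intervalIntegral.integral_finsetSum fun j _ => hint_ij i j]
    simp only [taylorKernel, intervalIntegral.integral_const_mul]
  rw [hsum]
  exact integral_sub_mul_nonneg fun c _ => sq_nonneg _

lemma integral_pos_of_ae_pos_s8 {α : Type*} [MeasurableSpace α] {μ : Measure α} [NeZero μ]
    {f : α → ℝ} (hf : ∀ᵐ a ∂μ, 0 < f a) (hfi : Integrable f μ) : 0 < ∫ a, f a ∂μ := by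
  rw [integral_pos_iff_support_of_nonneg_ae (hf.mono fun _ h => h.le) hfi, pos_iff_ne_zero]
  intro h
  obtain ⟨a, ha, hna⟩ := (hf.and (measure_eq_zero_iff_ae_notMem.mp h)).exists
  exact hna ha.ne'

section momentLambda

variable {Ω : Type*} [MeasurableSpace Ω] {μ : Measure Ω} [IsProbabilityMeasure μ] {X : Ω → ℝ}
  (hpos : ∀ᵐ ω ∂μ, 0 < X ω) (hmom : ∀ s : ℝ, Integrable (fun ω => X ω ^ s) μ)
  (hlog : Integrable (fun ω => log (X ω)) μ) (hxlog : Integrable (fun ω => X ω * log (X ω)) μ)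
include hpos hmom hlog hxlog

lemma integrable_taylorKernel (r : ℝ) :
    Integrable (fun ω => taylorKernel (∫ ω, X ω ∂μ) r (X ω)) μ := by
  have hX : Integrable X μ := by simpa using hmom 1
  set m := ∫ ω, X ω ∂μ
  have hm : 0 < m := integral_pos_of_ae_pos_s8 hpos hX
  rcases eq_or_ne r 0 with rfl | hr0
  · refine Integrable.congr ?_ (hpos.mono fun ω hω => (taylorKernel_zero hm hω).symm)
    exact (((hX.div_const m).sub (integrable_const 1)).sub hlog).add (integrable_const _)
  rcases eq_or_ne r 1 with rfl | hr1
  · refine Integrable.congr ?_ (hpos.mono fun ω hω => (taylorKernel_one hm hω).symm)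
    exact ((hxlog.sub hX).sub (hX.mul_const _)).add (integrable_const _)
  refine Integrable.congr ?_ (hpos.mono fun ω hω => (taylorKernel_of_ne hm hω hr0 hr1).symm)
  exact (((hmom r).sub (integrable_const _)).sub
    ((hX.sub (integrable_const m)).const_mul _)).div_const _

lemma momentLambda_eq_integral_taylorKernel (r : ℝ) :
    momentLambda μ X r = ∫ ω, taylorKernel (∫ ω, X ω ∂μ) r (X ω) ∂μ := by
  have hX : Integrable X μ := by simpa using hmom 1
  set m := ∫ ω, X ω ∂μ with hm_def
  have hm : 0 < m := integral_pos_of_ae_pos_s8 hpos hX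
  rcases eq_or_ne r 0 with rfl | hr0
  · rw [integral_congr_ae (hpos.mono fun ω hω => taylorKernel_zero hm hω),
      integral_add ?_ (integrable_const _), integral_sub ?_ hlog,
      integral_sub (hX.div_const m) (integrable_const 1), integral_div, ← hm_def]
    · simp [momentLambda, div_self hm.ne']
      ring
    all_goals fun_prop
  rcases eq_or_ne r 1 with rfl | hr1
  · rw [integral_congr_ae (hpos.mono fun ω hω => taylorKernel_one hm hω),
      integral_add ?_ (integrable_const _), integral_sub ?_ (hX.mul_const _),
      integral_sub hxlog hX, integral_mul_const, ← hm_def]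
    · simp [momentLambda]
      ring
    all_goals fun_prop
  rw [integral_congr_ae (hpos.mono fun ω hω => taylorKernel_of_ne hm hω hr0 hr1), integral_div,
    integral_sub ?_ ?_, integral_sub (hmom r) (integrable_const _), integral_const_mul,
    integral_sub hX (integrable_const m), ← hm_def]
  · simp [momentLambda, hr0, hr1, hm_def]
  all_goals fun_prop

lemma momentLambda_quadForm_nonneg {ι : Type*} [Fintype ι] (a r : ι → ℝ) :
    0 ≤ ∑ i, ∑ j, a i * a j * momentLambda μ X ((r i + r j) / 2) := by
  have hX : Integrable X μ := by simpa using hmom 1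
  have hint : ∀ i j, Integrable
      (fun ω => a i * a j * taylorKernel (∫ ω, X ω ∂μ) ((r i + r j) / 2) (X ω)) μ :=
    fun i j => (integrable_taylorKernel hpos hmom hlog hxlog _).const_mul _
  calc 0 ≤ ∫ ω, ∑ i, ∑ j, a i * a j * taylorKernel (∫ ω, X ω ∂μ) ((r i + r j) / 2) (X ω) ∂μ :=
        integral_nonneg_of_ae <| hpos.mono fun ω hω =>
          taylorKernel_quadForm_nonneg (integral_pos_of_ae_pos_s8 hpos hX) hω a r
    _ = ∑ i, ∑ j, a i * a j * momentLambda μ X ((r i + r j) / 2) := by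
        rw [integral_finsetSum _ fun i _ => integrable_finsetSum _ fun j _ => hint i j]
        simp only [integral_finsetSum _ fun j _ => hint _ j, integral_const_mul,
          momentLambda_eq_integral_taylorKernel hpos hmom hlog hxlog]

end momentLambda

theorem lemma2_general {Ω : Type*} [MeasurableSpace Ω] (μ : Measure Ω) [IsProbabilityMeasure μ]
    (X : Ω → ℝ) (hpos : ∀ᵐ ω ∂μ, 0 < X ω)
    (hmom : ∀ s : ℝ, Integrable (fun ω => X ω ^ s) μ)
    (hlog : Integrable (fun ω => Real.log (X ω)) μ)
    (hxlog : Integrable (fun ω => X ω * Real.log (X ω)) μ)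
    (s t u : ℝ) :
    momentXi μ X s t * momentXi μ X s u -
      (momentXi μ X s ((t + u) / 2) -
        momentXi μ X ((s + u) / 2) ((s + t) / 2)) ^ 2 ≥ 0 := by
  have hform : ∀ a b c : ℝ, 0 ≤ a ^ 2 * momentLambda μ X s + b ^ 2 * momentLambda μ X t +
      c ^ 2 * momentLambda μ X u + 2 * a * b * momentLambda μ X ((s + t) / 2) +
      2 * a * c * momentLambda μ X ((s + u) / 2) + 2 * b * c * momentLambda μ X ((t + u) / 2) := by
    intro a b c
    have := momentLambda_quadForm_nonneg hpos hmom hlog hxlog ![a, b, c] ![s, t, u]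
    simp only [Fin.sum_univ_three, Matrix.cons_val_zero, Matrix.cons_val_one,
      Matrix.cons_val_two, Matrix.tail_cons, Matrix.head_cons, add_self_div_two,
      add_comm t s, add_comm u s, add_comm u t] at this
    linarith
  have hmid : ((s + u) / 2 + (s + t) / 2) / 2 = (s + (t + u) / 2) / 2 := by ring
  have hschur := sq_sub_le_mul_of_quadForm_three_nonneg hform
  rw [momentXi, momentXi, momentXi, momentXi, hmid, ge_iff_le, sub_nonneg]
  linear_combination hschur

theorem lemma2 {Ω : Type*} [MeasurableSpace Ω] (μ : Measure Ω) [IsProbabilityMeasure μ]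
    (X : Ω → ℝ) (hX : Measurable X) (hpos : ∀ᵐ ω ∂μ, 0 < X ω)
    (hmom : ∀ s : ℝ, Integrable (fun ω => X ω ^ s) μ)
    (hlog : Integrable (fun ω => Real.log (X ω)) μ)
    (hxlog : Integrable (fun ω => X ω * Real.log (X ω)) μ)
    (s t u : ℝ) :
    momentXi μ X s t * momentXi μ X s u -
      (momentXi μ X s ((t + u) / 2) -
        momentXi μ X ((s + u) / 2) ((s + t) / 2)) ^ 2 ≥ 0 :=
  lemma2_general μ X hpos hmom hlog hxlog s t u
end
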